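/- For every left divisibility monoid M with hypercube alphabet H, the map N sending a word w over the irreducibles to its right normal form satisfies the recursion N(ε) = 1 and N(w) = N(λ(w,1)) · τ(w,1) for w ≠ ε, where τ and λ are the transition and output functions of the transducer with state set H, transition τ(x,a) = h(ax), and output λ(x,a) = u for any word u with ax̄ = ū·h(ax̄); moreover |λ(w,1)| < |w|, so the recursion computes N(w) in at most |w| iterations (quadratic time). -/

import Mathlib

section Defs
variable {M : Type*} [Monoid M]

/-- `a` left-divides `b` (`b` is a right multiple of `a`). -/
def LDvd (a b : M) : Prop := ∃ d, b = a * d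

/-- `a` right-divides `b` (`b` is a left multiple of `a`). -/
def RDvd (a b : M) : Prop := ∃ d, b = d * a

/-- `a` is an irreducible element of the monoid. -/
def IsIrred (a : M) : Prop := a ≠ 1 ∧ ∀ b c, a = b * c → b = 1 ∨ c = 1

/-- `c` is a right lcm of `a` and `b`. -/
def IsRightLcm (a b c : M) : Prop :=
  LDvd a c ∧ LDvd b c ∧ ∀ m, LDvd a m → LDvd b m → LDvd c m

/-- `c` is a right lcm of the set `s`. -/
def IsRightLcmSet (s : Set M) (c : M) : Prop :=
  (∀ x ∈ s, LDvd x c) ∧ ∀ m, (∀ x ∈ s, LDvd x m) → LDvd c m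

/-- A hypercube: a right lcm of a finite set of irreducible elements. -/
def IsHypercube (h : M) : Prop :=
  ∃ s : Finset M, (∀ x ∈ s, IsIrred x) ∧ IsRightLcmSet (↑s) h

/-- `h` is the maximal hypercube right-dividing `a`. -/
def IsMaxHC (a h : M) : Prop :=
  IsHypercube h ∧ RDvd h a ∧ ∀ k, IsHypercube k → RDvd k a → RDvd k h

/-- The list `L = [h_p, …, h_1]` of nontrivial hypercubes is a right normal form:
`h_i` is the maximal hypercube right-dividing `h_p ⋯ h_i`. -/
def IsRNF (hmap : M → M) (L : List M) : Prop :=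
  (∀ x ∈ L, IsHypercube x ∧ x ≠ 1) ∧
  ∀ n (hn : n < L.length), hmap ((L.take (n + 1)).prod) = L.get ⟨n, hn⟩

end Defs

/-- A left divisibility monoid: cancellative, generated by its finitely many
irreducibles, any two elements have a left gcd, and every set of left divisors
is a finite distributive lattice under left divisibility. -/
def IsLDM (M : Type*) [Monoid M] : Prop :=
  (∀ a b c : M, a * b = a * c → b = c) ∧
  (∀ a b c : M, b * a = c * a → b = c) ∧
  (∃ S : Finset M, (∀ x ∈ S, IsIrred x) ∧ Submonoid.closure (S : Set M) = ⊤) ∧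
  (∀ a b : M, ∃ g, LDvd g a ∧ LDvd g b ∧ ∀ c, LDvd c a → LDvd c b → LDvd c g) ∧
  (∀ a : M, {b : M | LDvd b a}.Finite) ∧
  (∀ a : M, ∃ i : DistribLattice {b : M // LDvd b a},
      ∀ x y : {b : M // LDvd b a}, i.le x y ↔ LDvd x.1 y.1)

/-!
Reading `w` from state `1`, the transducer keeps the invariant `λ(u,1)·τ(u,1) = ū` and
`τ(u,1) = h(ū)`, the latter because `h(ax) = h(h(a)x)` for irreducible `x`. So `N(λ(w,1))`
followed by the nontrivial hypercube `h(w̄)` is a right normal form of `w̄`, and right normal forms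
are unique. Finally, a left divisibility monoid is graded: by Jordan–Hölder in the distributive
lattice of left divisors, all words of irreducibles with the same value have the same length, so
the proper left divisor `λ(w,1)` of `w̄` is strictly shorter than `w`.
-/

lemma Finset.le_of_forall_inf_le {ι α : Type*} [DistribLattice α] [OrderBot α] {s : Finset ι}
    {f : ι → α} {t g : α} (ht : t ≤ s.sup f) (h : ∀ i ∈ s, t ⊓ f i ≤ g) : t ≤ g := by
  rw [← inf_eq_left.mpr ht, Finset.sup_inf_distrib_left]
  exact Finset.sup_le h

section Divisibility
variable {M : Type*} [Monoid M]

lemma ldvd_refl (a : M) : LDvd a a := ⟨1, (mul_one a).symm⟩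

lemma one_ldvd (a : M) : LDvd 1 a := ⟨a, (one_mul a).symm⟩

lemma LDvd.trans {a b c : M} (hab : LDvd a b) (hbc : LDvd b c) : LDvd a c := by
  obtain ⟨d, rfl⟩ := hab
  obtain ⟨e, rfl⟩ := hbc
  exact ⟨d * e, mul_assoc _ _ _⟩

lemma IsIrred.eq_one_or_eq_of_ldvd {d x : M} (hx : IsIrred x) (h : LDvd d x) :
    d = 1 ∨ d = x := by
  obtain ⟨e, he⟩ := h
  refine (hx.2 d e he).imp id fun he1 => ?_
  rw [he, he1, mul_one]

lemma IsIrred.isHypercube {x : M} (hx : IsIrred x) : IsHypercube x :=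
  ⟨{x}, by simpa using hx, by simpa using ldvd_refl x, fun m hm => hm x (by simp)⟩

end Divisibility

namespace IsLDM
variable {M : Type*} [Monoid M]

lemma mul_left_cancel (hM : IsLDM M) {a b c : M} (h : a * b = a * c) : b = c := hM.1 a b c h

lemma mul_right_cancel (hM : IsLDM M) {a b c : M} (h : b * a = c * a) : b = c := hM.2.1 a b c h

noncomputable abbrev divisorLattice (hM : IsLDM M) (a : M) :
    DistribLattice {b : M // LDvd b a} :=
  (hM.2.2.2.2.2 a).choose

lemma divisorLattice_le_iff (hM : IsLDM M) {a : M} (x y : {b : M // LDvd b a}) :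
    (hM.divisorLattice a).le x y ↔ LDvd x.1 y.1 :=
  (hM.2.2.2.2.2 a).choose_spec x y

lemma eq_one_of_mul_eq_one (hM : IsLDM M) {a b : M} (h : a * b = 1) : a = 1 ∧ b = 1 := by
  let := hM.divisorLattice 1
  have ha : (⟨a, b, h.symm⟩ : {b : M // LDvd b 1}) = ⟨1, one_ldvd 1⟩ :=
    le_antisymm ((hM.divisorLattice_le_iff _ _).mpr ⟨b, h.symm⟩)
      ((hM.divisorLattice_le_iff _ _).mpr (one_ldvd a))
  obtain rfl : a = 1 := congrArg Subtype.val ha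
  exact ⟨rfl, by rwa [one_mul] at h⟩

lemma rdvd_antisymm (hM : IsLDM M) {a b : M} (hab : RDvd a b) (hba : RDvd b a) : a = b := by
  obtain ⟨d, rfl⟩ := hab
  obtain ⟨e, he⟩ := hba
  have hed : e * d = 1 := hM.mul_right_cancel (a := a) (by rw [mul_assoc, ← he, one_mul])
  rw [(hM.eq_one_of_mul_eq_one hed).2, one_mul]

lemma eq_nil_of_prod_eq_one (hM : IsLDM M) {L : List M} (hL : ∀ x ∈ L, x ≠ 1)
    (h : L.prod = 1) : L = [] := by
  cases L with
  | nil => rfl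
  | cons x L =>
    rw [List.prod_cons] at h
    exact absurd (hM.eq_one_of_mul_eq_one h).1 (hL x List.mem_cons_self)

lemma exists_irred_list_prod_eq (hM : IsLDM M) (a : M) :
    ∃ v : List M, (∀ x ∈ v, IsIrred x) ∧ v.prod = a := by
  obtain ⟨S, hS, hgen⟩ := hM.2.2.1
  obtain ⟨v, hv, rfl⟩ := Submonoid.exists_list_of_mem_closure (s := (S : Set M))
    (hgen ▸ Submonoid.mem_top a)
  exact ⟨v, fun x hx => hS x (hv x hx), rfl⟩

lemma eq_or_eq_of_ldvd_mul_irred (hM : IsLDM M) {b d x : M} (hx : IsIrred x)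
    (hbd : LDvd b d) (hdx : LDvd d (b * x)) : d = b ∨ d = b * x := by
  obtain ⟨e, rfl⟩ := hbd
  obtain ⟨f, hf⟩ := hdx
  have hxef : x = e * f := hM.mul_left_cancel (by rw [hf, mul_assoc])
  refine (hx.2 e f hxef).imp (fun he => by rw [he, mul_one]) fun hf1 => ?_
  rw [hxef, hf1, mul_one]


/-- If `k` is the lcm of the irreducibles in `s` and `t ∣ k`, then by distributivity `t` is the
lcm of those elements of `s` dividing it. -/
lemma isHypercube_of_ldvd (hM : IsLDM M) {k t : M} (hk : IsHypercube k) (htk : LDvd t k) :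
    IsHypercube t := by
  classical
  obtain ⟨s, hs, hsk, hklcm⟩ := hk
  let := hM.divisorLattice k
  let : OrderBot {b : M // LDvd b k} :=
    { bot := ⟨1, one_ldvd k⟩
      bot_le := fun x => (hM.divisorLattice_le_iff _ _).mpr (one_ldvd x.1) }
  have le_iff (x y : {b : M // LDvd b k}) : x ≤ y ↔ LDvd x.1 y.1 := hM.divisorLattice_le_iff x y
  refine ⟨s.filter (LDvd · t), fun x hx => hs x (Finset.mem_filter.mp hx).1,
    fun x hx => (Finset.mem_filter.mp hx).2, fun m hm => ?_⟩
  obtain ⟨g, hgt, hgm, hg⟩ := hM.2.2.2.1 t m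
  let f : s → {b : M // LDvd b k} := fun x => ⟨x.1, hsk x.1 x.2⟩
  have hk_le : (⟨k, ldvd_refl k⟩ : {b : M // LDvd b k}) ≤ s.attach.sup f :=
    (le_iff _ _).mpr <| hklcm _ fun x hx =>
      (le_iff _ _).mp (Finset.le_sup (f := f) (Finset.mem_attach s ⟨x, hx⟩))
  have htg : (⟨t, htk⟩ : {b : M // LDvd b k}) ≤ ⟨g, hgt.trans htk⟩ := by
    refine Finset.le_of_forall_inf_le (le_trans ((le_iff _ _).mpr htk) hk_le) fun x _ => ?_
    have hdvd : LDvd ((⟨t, htk⟩ : {b : M // LDvd b k}) ⊓ f x).1 x.1 := (le_iff _ _).mp inf_le_right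
    rcases (hs x.1 x.2).eq_one_or_eq_of_ldvd hdvd with h1 | hx
    · exact (le_iff _ _).mpr (h1 ▸ one_ldvd g)
    · have hxt : LDvd x.1 t := hx ▸ (le_iff _ _).mp (inf_le_left (b := f x))
      exact (le_iff _ _).mpr <| hx ▸ hg x.1 hxt (hm x.1 (Finset.mem_filter.mpr ⟨x.2, hxt⟩))
  exact ((le_iff _ _).mp htg).trans hgm

/-- Jordan–Hölder in the modular lattice of left divisors of `c`: the prefix products of a word
of irreducibles form a maximal chain from `1` to `c`. -/
lemma length_eq_of_prod_eq (hM : IsLDM M) {u v : List M} (hu : ∀ x ∈ u, IsIrred x)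
    (hv : ∀ x ∈ v, IsIrred x) (huv : u.prod = v.prod) : u.length = v.length := by
  set c := u.prod
  let := hM.divisorLattice c
  have le_iff (x y : {b : M // LDvd b c}) : x ≤ y ↔ LDvd x.1 y.1 := hM.divisorLattice_le_iff x y
  have series (w : List M) (hw : ∀ x ∈ w, IsIrred x) (hwc : w.prod = c) :
      ∃ s : CompositionSeries {b : M // LDvd b c}, s.length = w.length ∧
        s.head = ⟨1, one_ldvd c⟩ ∧ s.last = ⟨c, ldvd_refl c⟩ := by
    have hdvd (i : ℕ) : LDvd (w.take i).prod c :=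
      ⟨(w.drop i).prod, by rw [List.prod_take_mul_prod_drop, hwc]⟩
    refine ⟨⟨w.length, fun i => ⟨(w.take i).prod, hdvd i⟩, fun i => ?_⟩, rfl, ?_, ?_⟩
    · have hx := hw _ (List.getElem_mem i.2)
      have hstep : (w.take (i + 1)).prod = (w.take i).prod * w[i] :=
        List.prod_take_succ _ _ i.2
      refine ⟨(le_iff _ _).mpr ⟨w[i], hstep⟩ |>.lt_of_ne fun h => hx.1 ?_, fun d hd hd' => ?_⟩
      · exact hM.mul_left_cancel (by simpa [hstep] using (congrArg Subtype.val h).symm)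
      · rcases hM.eq_or_eq_of_ldvd_mul_irred hx ((le_iff _ _).mp hd.le)
          (hstep ▸ (le_iff _ _).mp hd'.le) with h | h
        · exact hd.ne (Subtype.ext h.symm)
        · exact hd'.ne (Subtype.ext (h.trans hstep.symm))
    · exact Subtype.ext (by simp [RelSeries.head])
    · exact Subtype.ext (by simp [RelSeries.last, hwc])
  obtain ⟨s, hs, hs0, hs1⟩ := series u hu rfl
  obtain ⟨s', hs', hs0', hs1'⟩ := series v hv huv.symm
  rw [← hs, ← hs', (CompositionSeries.jordan_holder s s' (hs0.trans hs0'.symm)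
    (hs1.trans hs1'.symm)).length_eq]

lemma length_lt_of_prod_mul_eq (hM : IsLDM M) {u w : List M} (hu : ∀ x ∈ u, IsIrred x)
    (hw : ∀ x ∈ w, IsIrred x) {t : M} (ht : t ≠ 1) (h : u.prod * t = w.prod) :
    u.length < w.length := by
  obtain ⟨v, hv, rfl⟩ := hM.exists_irred_list_prod_eq t
  have hv0 : v ≠ [] := by rintro rfl; exact ht rfl
  have hlen := hM.length_eq_of_prod_eq (List.forall_mem_append.mpr ⟨hu, hv⟩) hw
    (by rw [List.prod_append, h])
  rw [List.length_append] at hlen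
  have := List.length_pos_iff.mpr hv0
  omega

end IsLDM

section MaxHypercube
variable {M : Type*} [Monoid M] {hmap : M → M}

lemma IsLDM.hmap_one (hM : IsLDM M) (hspec : ∀ a : M, IsMaxHC a (hmap a)) : hmap 1 = 1 := by
  obtain ⟨d, hd⟩ := (hspec 1).2.1
  exact (hM.eq_one_of_mul_eq_one hd.symm).2

lemma IsLDM.hmap_ne_one (hM : IsLDM M) (hspec : ∀ a : M, IsMaxHC a (hmap a)) {a x : M}
    (hx : IsIrred x) (hxa : RDvd x a) : hmap a ≠ 1 := by
  intro h
  obtain ⟨d, hd⟩ := (hspec a).2.2 x hx.isHypercube hxa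
  exact hx.1 (hM.eq_one_of_mul_eq_one (h ▸ hd).symm).2

/-- Write `h(ax) = kx`. As a left divisor of a hypercube, `k` is a hypercube, and it
right-divides `a`, hence also `h(a)`. -/
lemma IsLDM.hmap_mul_rdvd (hM : IsLDM M) (hspec : ∀ a : M, IsMaxHC a (hmap a)) {a x : M}
    (hx : IsIrred x) : RDvd (hmap (a * x)) (hmap a * x) := by
  obtain ⟨k, hk⟩ := (hspec (a * x)).2.2 x hx.isHypercube ⟨a, rfl⟩
  obtain ⟨e, he⟩ := (hspec (a * x)).2.1
  have hka : a = e * k := hM.mul_right_cancel (by rw [he, hk, mul_assoc])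
  obtain ⟨f, hf⟩ := (hspec a).2.2 k (hM.isHypercube_of_ldvd (hspec (a * x)).1 ⟨x, hk⟩) ⟨e, hka⟩
  exact ⟨f, by rw [hf, hk, mul_assoc]⟩

lemma IsLDM.hmap_mul_irred (hM : IsLDM M) (hspec : ∀ a : M, IsMaxHC a (hmap a)) {a x : M}
    (hx : IsIrred x) : hmap (a * x) = hmap (hmap a * x) := by
  obtain ⟨c, hc⟩ := (hspec a).2.1
  obtain ⟨d, hd⟩ := (hspec (hmap a * x)).2.1
  have hrdvd : RDvd (hmap (hmap a * x)) (a * x) :=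
    ⟨c * d, by rw [mul_assoc, ← hd, ← mul_assoc, ← hc]⟩
  exact hM.rdvd_antisymm ((hspec _).2.2 _ (hspec _).1 (hM.hmap_mul_rdvd hspec hx))
    ((hspec _).2.2 _ (hspec _).1 hrdvd)

end MaxHypercube

section NormalForm
variable {M : Type*} [Monoid M] {hmap : M → M}

lemma isRNF_append_singleton_iff {A : List M} {a : M} :
    IsRNF hmap (A ++ [a]) ↔
      IsRNF hmap A ∧ (IsHypercube a ∧ a ≠ 1) ∧ hmap (A.prod * a) = a := by
  simp only [IsRNF, List.forall_mem_append, List.forall_mem_singleton, List.get_eq_getElem,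
    List.length_append, List.length_singleton]
  constructor
  · rintro ⟨⟨hA, ha⟩, hidx⟩
    refine ⟨⟨hA, fun n hn => ?_⟩, ha, ?_⟩
    · simpa [List.take_append_of_le_length hn, List.getElem_append_left hn] using hidx n (by omega)
    · simpa [List.take_of_length_le] using hidx A.length (by omega)
  · rintro ⟨⟨hA, hidx⟩, ha, hlast⟩
    refine ⟨⟨hA, ha⟩, fun n hn => ?_⟩
    rcases Nat.lt_or_ge n A.length with hn' | hn'
    · simpa [List.take_append_of_le_length hn', List.getElem_append_left hn'] using hidx n hn'
    · obtain rfl : n = A.length := by omega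
      simpa [List.take_of_length_le] using hlast

lemma IsLDM.isRNF_unique (hM : IsLDM M) {L L' : List M} (hL : IsRNF hmap L)
    (hL' : IsRNF hmap L') (h : L.prod = L'.prod) : L = L' := by
  induction L using List.reverseRecOn generalizing L' with
  | nil =>
    exact (hM.eq_nil_of_prod_eq_one (fun x hx => (hL'.1 x hx).2) h.symm).symm
  | append_singleton A a ih =>
    obtain rfl | ⟨B, b, rfl⟩ := L'.eq_nil_or_concat'
    · exact hM.eq_nil_of_prod_eq_one (fun x hx => (hL.1 x hx).2) h
    rw [isRNF_append_singleton_iff] at hL hL'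
    simp only [List.prod_append, List.prod_singleton] at h
    obtain rfl : a = b := by rw [← hL.2.2, ← hL'.2.2, h]
    rw [ih hL.1 hL'.1 (hM.mul_right_cancel h)]

end NormalForm

section Transducer
variable {M : Type*} [Monoid M] {hmap : M → M}

lemma IsLDM.tauE_hmap (hM : IsLDM M) (hspec : ∀ a : M, IsMaxHC a (hmap a))
    {tauE : List M → M → M} (htau1 : ∀ q : M, tauE [] q = q)
    (htau2 : ∀ (x : M) (u : List M) (q : M), tauE (x :: u) q = tauE u (hmap (q * x)))
    {u : List M} (hu : ∀ x ∈ u, IsIrred x) (p : M) :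
    tauE u (hmap p) = hmap (p * u.prod) := by
  induction u generalizing p with
  | nil => rw [htau1, List.prod_nil, mul_one]
  | cons x u ih =>
    rw [htau2, ← hM.hmap_mul_irred hspec (hu x List.mem_cons_self),
      ih (fun y hy => hu y (List.mem_cons_of_mem _ hy)), List.prod_cons, mul_assoc]

lemma lamE_irred {lam : M → M → List M}
    (hlam : ∀ (q x : M), IsIrred x → ∀ c ∈ lam x q, IsIrred c)
    {lamE : List M → M → List M} (hlamE1 : ∀ q : M, lamE [] q = [])
    (hlamE2 : ∀ (x : M) (u : List M) (q : M),
      lamE (x :: u) q = lam x q ++ lamE u (hmap (q * x)))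
    {u : List M} (hu : ∀ x ∈ u, IsIrred x) (q : M) : ∀ c ∈ lamE u q, IsIrred c := by
  induction u generalizing q with
  | nil => simp [hlamE1]
  | cons x u ih =>
    simp only [hlamE2, List.forall_mem_append]
    exact ⟨hlam q x (hu x List.mem_cons_self),
      ih (fun y hy => hu y (List.mem_cons_of_mem _ hy)) _⟩

lemma lamE_prod_mul_tauE {lam : M → M → List M}
    (hlam : ∀ (q x : M), IsIrred x → q * x = (lam x q).prod * hmap (q * x))
    {tauE : List M → M → M} (htau1 : ∀ q : M, tauE [] q = q)
    (htau2 : ∀ (x : M) (u : List M) (q : M), tauE (x :: u) q = tauE u (hmap (q * x)))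
    {lamE : List M → M → List M} (hlamE1 : ∀ q : M, lamE [] q = [])
    (hlamE2 : ∀ (x : M) (u : List M) (q : M),
      lamE (x :: u) q = lam x q ++ lamE u (hmap (q * x)))
    {u : List M} (hu : ∀ x ∈ u, IsIrred x) (q : M) :
    (lamE u q).prod * tauE u q = q * u.prod := by
  induction u generalizing q with
  | nil => rw [hlamE1, htau1, List.prod_nil, one_mul, mul_one]
  | cons x u ih =>
    rw [hlamE2, htau2, List.prod_append, mul_assoc,
      ih (fun y hy => hu y (List.mem_cons_of_mem _ hy)), ← mul_assoc,
      ← hlam q x (hu x List.mem_cons_self), List.prod_cons, mul_assoc]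

end Transducer

/-- Theorem 28: the transducer with state set the hypercubes, transition
`τ(x,q) = h(qx)` and output `λ(x,q) = u` where `qx = ū·h(qx)`, computes right
normal forms by the recursion `N(ε) = 1`, `N(w) = N(λ(w,1))·τ(w,1)`; since
`|λ(w,1)| < |w|`, this takes at most `|w|` runs (quadratic time). -/
theorem stmt_19 {M : Type*} [Monoid M] (hM : IsLDM M)
    (hmap : M → M) (hspec : ∀ a : M, IsMaxHC a (hmap a))
    (lam : M → M → List M)
    (hlam : ∀ (q x : M), IsIrred x →
      (∀ c ∈ lam x q, IsIrred c) ∧ q * x = (lam x q).prod * hmap (q * x))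
    (tauE : List M → M → M)
    (htau1 : ∀ q : M, tauE [] q = q)
    (htau2 : ∀ (x : M) (u : List M) (q : M), tauE (x :: u) q = tauE u (hmap (q * x)))
    (lamE : List M → M → List M)
    (hlamE1 : ∀ q : M, lamE [] q = [])
    (hlamE2 : ∀ (x : M) (u : List M) (q : M),
      lamE (x :: u) q = lam x q ++ lamE u (hmap (q * x)))
    (N : List M → List M)
    (hN : ∀ w : List M, (∀ x ∈ w, IsIrred x) → IsRNF hmap (N w) ∧ (N w).prod = w.prod) :
    N [] = [] ∧
    ∀ w : List M, (∀ x ∈ w, IsIrred x) → w ≠ [] →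
      N w = N (lamE w 1) ++ [tauE w 1] ∧ (lamE w 1).length < w.length := by
  obtain ⟨hN0, hN0prod⟩ := hN [] (by simp)
  refine ⟨hM.eq_nil_of_prod_eq_one (fun x hx => (hN0.1 x hx).2) hN0prod, fun w hw hw0 => ?_⟩
  have htau : tauE w 1 = hmap w.prod := by
    simpa [hM.hmap_one hspec] using hM.tauE_hmap hspec htau1 htau2 hw 1
  have hprod : (lamE w 1).prod * tauE w 1 = w.prod := by
    simpa using lamE_prod_mul_tauE (fun q x hx => (hlam q x hx).2) htau1 htau2 hlamE1 hlamE2 hw 1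
  have hlamIrred := lamE_irred (fun q x hx => (hlam q x hx).1) hlamE1 hlamE2 hw 1
  have htau_ne_one : tauE w 1 ≠ 1 := by
    obtain ⟨w', x, rfl⟩ := (List.eq_nil_or_concat' w).resolve_left hw0
    exact htau ▸ hM.hmap_ne_one hspec (hw x (by simp)) ⟨w'.prod, by simp⟩
  obtain ⟨hNw, hNwprod⟩ := hN w hw
  obtain ⟨hNl, hNlprod⟩ := hN _ hlamIrred
  refine ⟨hM.isRNF_unique hNw ?_ ?_, ?_⟩
  · exact isRNF_append_singleton_iff.mpr
      ⟨hNl, ⟨htau ▸ (hspec _).1, htau_ne_one⟩, by rw [hNlprod, hprod, htau]⟩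
  · rw [List.prod_append, List.prod_singleton, hNlprod, hprod, hNwprod]
  · exact hM.length_lt_of_prod_mul_eq hlamIrred hw htau_ne_one hprod
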